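/- Let d ≥ 1, let a be a unit of ℤ/dℤ, and let A_a be the set of permutations of ℤ/dℤ of the form x ↦ a·x + b for b ∈ ℤ/dℤ. Let f_{A_a} be the characteristic polynomial of the finite set A_a of permutations of the d-element set ℤ/dℤ. Then the iterates f_{A_a}^{∘n}(1) converge, as n → ∞, to 1 if a − 1 is a unit of ℤ/dℤ and to 0 otherwise. -/

import Mathlib

open Finset Filter

/-- The number of fixed points of a permutation of `ZMod d`. -/
def numFix (d : ℕ) [NeZero d] (σ : Equiv.Perm (ZMod d)) : ℕ :=
  (Finset.univ.filter fun x => σ x = x).card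

/-- `D S k` is the number of permutations in `S` having exactly `k` fixed points. -/
def D (d : ℕ) [NeZero d] (S : Finset (Equiv.Perm (ZMod d))) (k : ℕ) : ℕ :=
  (S.filter fun σ => numFix d σ = k).card

/-- The characteristic polynomial of a finite set of permutations of the `d`-element
set `ZMod d`: `f_S(x) = ∑_{k=1}^{d} (D_S(k)/#S)·(1 − (1 − x)^k)`. -/
noncomputable def fS (d : ℕ) [NeZero d] (S : Finset (Equiv.Perm (ZMod d))) (x : ℝ) : ℝ :=
  ∑ k ∈ Finset.Icc 1 d, ((D d S k : ℝ) / (S.card : ℝ)) * (1 - (1 - x) ^ k)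

/-- The set of permutations of `ZMod d` of the form `x ↦ a·x + b` for some `b`. -/
def Aa (d : ℕ) [NeZero d] (a : ZMod d) : Finset (Equiv.Perm (ZMod d)) :=
  Finset.univ.filter fun σ => ∃ b : ZMod d, ∀ x, σ x = a * x + b

/-!
Solving `a·x + b = x` shows that the fixed points of `x ↦ a·x + b` form a fibre over `b` of the
additive map `φ x = x·(1 - a)`. All nonempty fibres of `φ` have the size `m` of its kernel, and
exactly `d / m` of them are nonempty, so `f_{A_a}(x) = (1 - (1 - x)^m) / m`. If `1 - a` is a unit
then `m = 1` and `f_{A_a}` is the identity. Otherwise `m ≥ 2`, and the strict Bernoulli inequality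
gives `f_{A_a}(x) < x` on `(0, 1]`, so the iterates decrease to the only fixed point `0`.
-/

open Topology

lemma fS_eq_sum_div (d : ℕ) [NeZero d] (S : Finset (Equiv.Perm (ZMod d))) (x : ℝ) :
    fS d S x = (∑ σ ∈ S, (1 - (1 - x) ^ numFix d σ)) / #S := by
  have hmaps : ∀ σ ∈ S, numFix d σ ∈ range (d + 1) := fun σ _ => by
    have : numFix d σ ≤ d := (card_filter_le _ _).trans_eq (by rw [card_univ, ZMod.card])
    exact mem_range.2 (Nat.lt_succ_of_le this)
  calc fS d S x = ∑ k ∈ range (d + 1), (D d S k : ℝ) / #S * (1 - (1 - x) ^ k) := by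
        refine sum_subset (fun k hk => ?_) fun k hk hk' => ?_
        · simp only [mem_Icc, mem_range] at hk ⊢
          omega
        · obtain rfl : k = 0 := by simp only [mem_Icc, mem_range] at hk hk'; omega
          simp
    _ = _ := by
        rw [← sum_fiberwise_of_maps_to' hmaps fun k => 1 - (1 - x) ^ k, sum_div]
        refine sum_congr rfl fun k _ => ?_
        rw [sum_const, nsmul_eq_mul, D]
        ring

section Affine

variable {R : Type*} [Ring R]

def affinePerm (u : Rˣ) (b : R) : Equiv.Perm R :=
  (Units.mulLeft u).trans (Equiv.addRight b)

@[simp]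
lemma affinePerm_apply (u : Rˣ) (b x : R) : affinePerm u b x = u * x + b := rfl

lemma affinePerm_injective (u : Rˣ) : Function.Injective (affinePerm u) := fun b₁ b₂ h => by
  simpa using congr($h 0)

end Affine

section AffineZMod

variable {d : ℕ} [NeZero d]

lemma Aa_eq_image {a : ZMod d} (ha : IsUnit a) : Aa d a = univ.image (affinePerm ha.unit) := by
  ext σ
  simp only [Aa, mem_filter, mem_univ, true_and, mem_image]
  constructor
  · rintro ⟨b, hb⟩
    exact ⟨b, Equiv.ext fun x => by simp [hb]⟩
  · rintro ⟨b, rfl⟩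
    exact ⟨b, by simp⟩

lemma numFix_affinePerm {a : ZMod d} (ha : IsUnit a) (b : ZMod d) :
    numFix d (affinePerm ha.unit b) = #{x | x * (1 - a) = b} := by
  refine congrArg card (filter_congr fun x _ => ?_)
  rw [affinePerm_apply, IsUnit.unit_spec]
  constructor <;> intro h <;> linear_combination -h

end AffineZMod

section Fibres

variable {G H : Type*} [AddGroup G] [Fintype G] [AddGroup H] [Fintype H] [DecidableEq H]

lemma AddMonoidHom.sum_apply_card_fiber {M : Type*} [AddCommMonoid M] (φ : G →+ H)
    (g : ℕ → M) (hg : g 0 = 0) :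
    ∑ c, g #{x | φ x = c} = #(univ.image φ) • g #{x | φ x = 0} := by
  have hzero : (0 : H) ∈ Set.range φ := ⟨0, map_zero φ⟩
  calc ∑ c, g #{x | φ x = c} = ∑ c ∈ univ.image φ, g #{x | φ x = c} := by
        refine (sum_subset (subset_univ _) fun c _ hc => ?_).symm
        rw [filter_false_of_mem fun x _ hx => hc (mem_image.2 ⟨x, mem_univ x, hx⟩), card_empty, hg]
    _ = ∑ _c ∈ univ.image φ, g #{x | φ x = 0} := by
        refine sum_congr rfl fun c hc => ?_
        obtain ⟨x, -, rfl⟩ := mem_image.1 hc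
        rw [AddMonoidHom.card_fiber_eq_of_mem_range φ ⟨x, rfl⟩ hzero]
    _ = _ := sum_const _

lemma AddMonoidHom.card_image_mul_card_ker (φ : G →+ H) :
    #(univ.image φ) * #{x | φ x = 0} = Fintype.card G := by
  rw [← smul_eq_mul]
  refine (φ.sum_apply_card_fiber (fun k => k) rfl).symm.trans ?_
  rw [← card_univ, card_eq_sum_card_fiberwise fun x _ => mem_univ (φ x)]

end Fibres

lemma card_mul_eq_zero_eq_one_iff {R : Type*} [CommRing R] [Fintype R] [DecidableEq R] (r : R) :
    #{x : R | x * r = 0} = 1 ↔ IsUnit r := by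
  rw [isUnit_iff_mem_nonZeroDivisors_of_finite, mem_nonZeroDivisors_iff_right]
  have hzero : (0 : R) ∈ ({x : R | x * r = 0} : Finset R) := by simp
  constructor
  · intro h x hx
    exact card_le_one.1 h.le x (by simpa using hx) 0 hzero
  · intro h
    refine card_eq_one.2 ⟨0, ?_⟩
    ext x
    simp only [mem_filter, mem_univ, true_and, mem_singleton]
    exact ⟨h x, fun hx => by simp [hx]⟩

lemma fS_Aa {d : ℕ} [NeZero d] {a : ZMod d} (ha : IsUnit a) :
    fS d (Aa d a) = fun x : ℝ => (1 - (1 - x) ^ #{y : ZMod d | y * (1 - a) = 0}) /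
      (#{y : ZMod d | y * (1 - a) = 0} : ℝ) := by
  funext x
  set m := #{y : ZMod d | y * (1 - a) = 0}
  set r := #(univ.image fun y : ZMod d => y * (1 - a))
  have hsum : ∑ c : ZMod d, (1 - (1 - x) ^ #{y : ZMod d | y * (1 - a) = c}) =
      r • (1 - (1 - x) ^ m) :=
    (AddMonoidHom.mulRight (1 - a)).sum_apply_card_fiber (fun k => 1 - (1 - x) ^ k) (by simp)
  have hcard : (d : ℝ) = r * m := by
    exact_mod_cast ((AddMonoidHom.mulRight (1 - a)).card_image_mul_card_ker.trans (ZMod.card d)).symm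
  have hm : (m : ℝ) ≠ 0 := by exact_mod_cast (card_pos.2 ⟨0, by simp⟩).ne'
  have hr : (r : ℝ) ≠ 0 := left_ne_zero_of_mul (hcard ▸ Nat.cast_ne_zero.2 (NeZero.ne d))
  rw [fS_eq_sum_div, Aa_eq_image ha, sum_image fun _ _ _ _ h => affinePerm_injective _ h,
    card_image_of_injective _ (affinePerm_injective _), card_univ, ZMod.card]
  simp only [numFix_affinePerm ha]
  rw [hsum, nsmul_eq_mul, hcard]
  field_simp

lemma tendsto_iterate_zero_of_lt_self {g : ℝ → ℝ} (hg : Continuous g)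
    (hmaps : Set.MapsTo g (Set.Icc 0 1) (Set.Icc 0 1)) (h0 : g 0 = 0)
    (hlt : ∀ x ∈ Set.Ioc (0 : ℝ) 1, g x < x) {x₀ : ℝ} (hx₀ : x₀ ∈ Set.Icc 0 1) :
    Tendsto (fun n => g^[n] x₀) atTop (𝓝 0) := by
  set u : ℕ → ℝ := fun n => g^[n] x₀
  have hmem : ∀ n, u n ∈ Set.Icc 0 1 := fun n => hmaps.iterate n hx₀
  have hle : ∀ x ∈ Set.Icc (0 : ℝ) 1, g x ≤ x := by
    rintro x ⟨hx0, hx1⟩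
    rcases hx0.eq_or_lt with rfl | hpos
    · exact h0.le
    · exact (hlt x ⟨hpos, hx1⟩).le
  have hanti : Antitone u := antitone_nat_of_succ_le fun n => by
    simp only [u, Function.iterate_succ_apply']
    exact hle _ (hmem n)
  have hlim := tendsto_atTop_ciInf hanti ⟨0, by rintro _ ⟨n, rfl⟩; exact (hmem n).1⟩
  have hL : ⨅ n, u n ∈ Set.Icc (0 : ℝ) 1 :=
    isClosed_Icc.mem_of_tendsto hlim (Eventually.of_forall hmem)
  have hfix : g (⨅ n, u n) = ⨅ n, u n := isFixedPt_of_tendsto_iterate hlim hg.continuousAt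
  obtain hL0 | hLpos := hL.1.eq_or_lt
  · rwa [← hL0] at hlim
  · exact absurd hfix (hlt _ ⟨hLpos, hL.2⟩).ne

lemma tendsto_iterate_one_sub_one_sub_pow_div {m : ℕ} (hm : 1 < m) {x₀ : ℝ}
    (hx₀ : x₀ ∈ Set.Icc 0 1) :
    Tendsto (fun n => (fun x : ℝ => (1 - (1 - x) ^ m) / m)^[n] x₀) atTop (𝓝 0) := by
  have hm' : (1 : ℝ) < m := by exact_mod_cast hm
  refine tendsto_iterate_zero_of_lt_self (by fun_prop) ?_ (by simp) ?_ hx₀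
  · rintro x ⟨hx0, hx1⟩
    have h1 : (0 : ℝ) ≤ (1 - x) ^ m := pow_nonneg (by linarith) m
    have h2 : (1 - x) ^ m ≤ 1 := pow_le_one₀ (by linarith) (by linarith)
    constructor
    · exact div_nonneg (by linarith) (by linarith)
    · rw [div_le_one (by linarith)]
      linarith
  · rintro x ⟨hx0, hx1⟩
    have hbern := one_add_mul_self_lt_rpow_one_add (by linarith) (neg_ne_zero.2 hx0.ne') hm'
    rw [Real.rpow_natCast, ← sub_eq_add_neg, mul_neg, ← sub_eq_add_neg, mul_comm] at hbern
    rw [div_lt_iff₀ (by linarith)]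
    linarith

theorem stmt17 (d : ℕ) [NeZero d] (a : ZMod d) (ha : IsUnit a) :
    (IsUnit (a - 1) →
      Tendsto (fun n => (fS d (Aa d a))^[n] 1) atTop (nhds 1)) ∧
    (¬ IsUnit (a - 1) →
      Tendsto (fun n => (fS d (Aa d a))^[n] 1) atTop (nhds 0)) := by
  set m := #{y : ZMod d | y * (1 - a) = 0}
  have hunit : IsUnit (a - 1) ↔ m = 1 := by
    rw [← IsUnit.neg_iff, neg_sub, card_mul_eq_zero_eq_one_iff]
  have hf : fS d (Aa d a) = fun x : ℝ => (1 - (1 - x) ^ m) / m := fS_Aa ha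
  refine ⟨fun h => ?_, fun h => ?_⟩
  · have hid : fS d (Aa d a) = id := by
      rw [hf, hunit.1 h]
      funext x
      simp
    simp only [hid, Function.iterate_id, id_eq, tendsto_const_nhds]
  · have hm : 1 < m := lt_of_le_of_ne (card_pos.2 ⟨0, by simp⟩) (Ne.symm (mt hunit.2 h))
    rw [hf]
    exact tendsto_iterate_one_sub_one_sub_pow_div hm (by simp)
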